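/- Let t ∈ (ℝ⁴)* be a constant nonzero covector and h a constant spatial metric compatible with t (symmetric, positive semidefinite on covectors, h^{ab} t_b = 0, radical equal to the span of t). Let U ⊆ ℝ⁴ be open, ρ : U → ℝ smooth, and φ : U → ℝ⁴ smooth with t_a φ^a = 0 and ∂_a φ^a = 4πρ on U (a model of Newtonian gravitation). Let x ∈ ℝ⁴ be a nonzero constant vector with t_a x^a = 0, and let ψ : U → ℝ be smooth with x^a ∂_a ψ = 0 and h^{ab} (∂_a ψ)(∂_b ψ) > 0 at every point of U. Define the force field F̌^a_b = φ^a t_b + x^a ∂_b ψ and the connection ∇̌ with Christoffel symbols Γ̌^a_{bc} = −x^a (∂_b ψ) t_c. Then at every point of U: (1) ∇̌ is compatible with the metrics: ∇̌_a t_b = ∂_a t_b − Γ̌^n_{ab} t_n = 0 and ∇̌_a h^{bc} = ∂_a h^{bc} + Γ̌^b_{an} h^{nc} + Γ̌^c_{an} h^{bn} = 0; (2) ∇̌ is flat: Ř^a_{bcd} = ∂_d Γ̌^a_{cb} − ∂_c Γ̌^a_{db} + Γ̌^a_{dm} Γ̌^m_{cb} − Γ̌^a_{cm} Γ̌^m_{db}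 = 0; (3) the torsion of ∇̌ is T^a_{bc} = Γ̌^a_{cb} − Γ̌^a_{bc} = F̌^a_b t_c − F̌^a_c t_b, and it is nonzero at every point of U; (4) for every twice differentiable curve γ in U with t_a γ̇^a = 1, γ̈^a = −φ^a(γ) if and only if γ̈^a + Γ̌^a_{bc}(γ) γ̇^b γ̇^c = −F̌^a_b(γ) γ̇^b; (5) the field equation holds: δ^n_a ∇̌_{[n} F̌^a_{b]} = 2πρ t_b, where ∇̌_n F̌^a_b = ∂_n F̌^a_b + Γ̌^a_{nm} F̌^m_b − Γ̌^m_{nb} F̌^a_m. In particular, the degeometrized pair associated with a given mass density ρ is not unique: both the torsion-free Newtonian pair (∂, φ^a t_b) and the torsional pair (∇̌, F̌) satisfy conditions (1)–(5) for the same ρ. -/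

import Mathlib

/-- The coordinate partial derivative on ℝ⁴ in the `i`-th direction. -/
noncomputable def pd (i : Fin 4) (f : (Fin 4 → ℝ) → ℝ) (p : Fin 4 → ℝ) : ℝ :=
  fderiv ℝ f p (Pi.single i 1)

open Filter in
lemma pd_const (i : Fin 4) (c : ℝ) (p : Fin 4 → ℝ) : pd i (fun _ => c) p = 0 := by
  simp [pd]

lemma pd_zero_of_eventually {f : (Fin 4 → ℝ) → ℝ} {U : Set (Fin 4 → ℝ)} (hU : IsOpen U)
    {p : Fin 4 → ℝ} (hp : p ∈ U) (hf : ∀ q ∈ U, f q = 0) (i : Fin 4) : pd i f p = 0 := by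
  have hev : f =ᶠ[nhds p] (fun _ => (0:ℝ)) := by
    filter_upwards [hU.mem_nhds hp] with q hq using hf q hq
  unfold pd
  rw [hev.fderiv_eq]
  simp

lemma pd_const_mul {f : (Fin 4 → ℝ) → ℝ} {p : Fin 4 → ℝ} (hf : DifferentiableAt ℝ f p)
    (i : Fin 4) (k : ℝ) : pd i (fun q => k * f q) p = k * pd i f p := by
  unfold pd
  rw [fderiv_const_mul hf k]
  simp

lemma pd_add {f g : (Fin 4 → ℝ) → ℝ} {p : Fin 4 → ℝ} (hf : DifferentiableAt ℝ f p)
    (hg : DifferentiableAt ℝ g p) (i : Fin 4) :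
    pd i (fun q => f q + g q) p = pd i f p + pd i g p := by
  unfold pd
  rw [fderiv_fun_add hf hg]
  simp

lemma pd_sum {g : Fin 4 → (Fin 4 → ℝ) → ℝ} {p : Fin 4 → ℝ}
    (hg : ∀ n, DifferentiableAt ℝ (g n) p) (i : Fin 4) :
    pd i (fun q => ∑ n, g n q) p = ∑ n, pd i (g n) p := by
  unfold pd
  rw [fderiv_fun_sum (fun n _ => hg n)]
  simp

lemma pd_eq_eval {ψ : (Fin 4 → ℝ) → ℝ} (c : Fin 4) :
    (fun q => pd c ψ q)
      = (fun q => (ContinuousLinearMap.apply ℝ ℝ (Pi.single c (1:ℝ))) (fderiv ℝ ψ q)) := rfl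

lemma diff_pd {U : Set (Fin 4 → ℝ)} (hU : IsOpen U) {ψ : (Fin 4 → ℝ) → ℝ}
    (hψ : ContDiffOn ℝ (⊤ : ℕ∞) ψ U) {p : Fin 4 → ℝ} (hp : p ∈ U) (c : Fin 4) :
    DifferentiableAt ℝ (fun q => pd c ψ q) p := by
  have h1 : ContDiffAt ℝ (⊤ : ℕ∞) ψ p := hψ.contDiffAt (hU.mem_nhds hp)
  have h2 : ContDiffAt ℝ 1 (fderiv ℝ ψ) p := h1.fderiv_right (by exact WithTop.coe_le_coe.mpr le_top)
  have h3 : DifferentiableAt ℝ (fderiv ℝ ψ) p := h2.differentiableAt one_ne_zero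
  rw [pd_eq_eval]
  exact (ContinuousLinearMap.differentiableAt _).comp p h3

lemma pd_swap {U : Set (Fin 4 → ℝ)} (hU : IsOpen U) {ψ : (Fin 4 → ℝ) → ℝ}
    (hψ : ContDiffOn ℝ (⊤ : ℕ∞) ψ U) {p : Fin 4 → ℝ} (hp : p ∈ U) (c d : Fin 4) :
    pd d (fun q => pd c ψ q) p = pd c (fun q => pd d ψ q) p := by
  have h1 : ContDiffAt ℝ (⊤ : ℕ∞) ψ p := hψ.contDiffAt (hU.mem_nhds hp)
  have h2 : ContDiffAt ℝ 1 (fderiv ℝ ψ) p := h1.fderiv_right (by exact WithTop.coe_le_coe.mpr le_top)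
  have h3 : DifferentiableAt ℝ (fderiv ℝ ψ) p := h2.differentiableAt one_ne_zero
  have hev : ∀ᶠ y in nhds p, HasFDerivAt ψ (fderiv ℝ ψ y) y := by
    filter_upwards [hU.mem_nhds hp] with q hq
    exact ((hψ.contDiffAt (hU.mem_nhds hq)).differentiableAt (by simp)).hasFDerivAt
  have hsymm := second_derivative_symmetric_of_eventually hev h3.hasFDerivAt
  have key : ∀ c e : Fin 4,
      pd e (fun q => pd c ψ q) p
        = fderiv ℝ (fderiv ℝ ψ) p (Pi.single e 1) (Pi.single c 1) := by
    intro c e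
    unfold pd
    rw [fderiv_clm_apply h3 (differentiableAt_const _)]
    simp
  rw [key c d, key d c, hsymm]

/-- degeometrization with torsion, concrete non-uniqueness: given a model
of Newtonian gravitation `(∂, φ)` with mass density `ρ`, a nonzero constant spacelike
vector `x` and a smooth `ψ` with spacelike nonzero gradient orthogonal to `x`, the pair
`(∇̌, F̌)` with `F̌^a_b = φ^a t_b + x^a ∂_b ψ` and `Γ̌^a_{bc} = −x^a (∂_b ψ) t_c`
satisfies: (1) metric compatibility, (2) flatness, (3) torsion
`T^a_{bc} = F̌^a_b t_c − F̌^a_c t_b`, nonvanishing at every point, (4) the geodesic/force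
equivalence for unit timelike curves, and (5) the field equation
`δ^n_a ∇̌_{[n} F̌^a_{b]} = 2πρ t_b`; moreover the torsion-free Newtonian pair
`(∂, φ^a t_b)` satisfies the field equation for the same `ρ`, so the degeometrized
pair is not unique. -/
theorem degeometrization_with_torsion
    (t : Fin 4 → ℝ) (ht : t ≠ 0)
    (h : Fin 4 → Fin 4 → ℝ)
    (hsym : ∀ a b, h a b = h b a)
    (hpsd : ∀ ω : Fin 4 → ℝ, 0 ≤ ∑ a, ∑ b, ω a * h a b * ω b)
    (horth : ∀ a, ∑ b, h a b * t b = 0)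
    (hrad : ∀ ω : Fin 4 → ℝ, (∀ b, ∑ a, ω a * h a b = 0) ↔ ∃ k : ℝ, ω = k • t)
    (U : Set (Fin 4 → ℝ)) (hU : IsOpen U)
    (ρ : (Fin 4 → ℝ) → ℝ) (hρ : ContDiffOn ℝ (⊤ : ℕ∞) ρ U)
    (φ : (Fin 4 → ℝ) → Fin 4 → ℝ)
    (hφ : ∀ a, ContDiffOn ℝ (⊤ : ℕ∞) (fun p => φ p a) U)
    (hφt : ∀ p ∈ U, ∑ a, t a * φ p a = 0)
    (hPoisson : ∀ p ∈ U, ∑ a, pd a (fun q => φ q a) p = 4 * Real.pi * ρ p)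
    (x : Fin 4 → ℝ) (hx : x ≠ 0) (htx : ∑ a, t a * x a = 0)
    (ψ : (Fin 4 → ℝ) → ℝ) (hψ : ContDiffOn ℝ (⊤ : ℕ∞) ψ U)
    (hxψ : ∀ p ∈ U, ∑ a, x a * pd a ψ p = 0)
    (hψsp : ∀ p ∈ U, 0 < ∑ a, ∑ b, h a b * pd a ψ p * pd b ψ p)
    (F : (Fin 4 → ℝ) → Fin 4 → Fin 4 → ℝ)
    (hF : ∀ p a b, F p a b = φ p a * t b + x a * pd b ψ p)
    (Γ : (Fin 4 → ℝ) → Fin 4 → Fin 4 → Fin 4 → ℝ)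
    (hΓ : ∀ p a b c, Γ p a b c = -(x a * pd b ψ p * t c))
    (D : (Fin 4 → ℝ) → Fin 4 → Fin 4 → Fin 4 → ℝ)
    (hD : ∀ p n a b, D p n a b =
      pd n (fun q => F q a b) p + ∑ m, Γ p a n m * F p m b
        - ∑ m, Γ p m n b * F p a m) :
    -- (1) compatibility with the classical metrics
    (∀ p ∈ U, ∀ a b,
        pd a (fun _ => t b) p - ∑ n, Γ p n a b * t n = 0)
    ∧ (∀ p ∈ U, ∀ a b c,
        pd a (fun _ => h b c) p
          + ∑ n, (Γ p b a n * h n c + Γ p c a n * h b n) = 0)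
    -- (2) flatness
    ∧ (∀ p ∈ U, ∀ a b c d,
        pd d (fun q => Γ q a c b) p - pd c (fun q => Γ q a d b) p
          + ∑ m, (Γ p a d m * Γ p m c b - Γ p a c m * Γ p m d b) = 0)
    -- (3) torsion has the force form and is nonvanishing everywhere on U
    ∧ (∀ p ∈ U, ∀ a b c,
        Γ p a c b - Γ p a b c = F p a b * t c - F p a c * t b)
    ∧ (∀ p ∈ U, ∃ a b c, Γ p a c b - Γ p a b c ≠ 0)
    -- (4) equations of motion: Newtonian iff torsional force equation
    ∧ (∀ (I : Set ℝ), I.OrdConnected → ∀ γ : ℝ → Fin 4 → ℝ,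
        (∀ s ∈ I, γ s ∈ U) →
        (∀ a, ∀ s ∈ I, DifferentiableAt ℝ (fun u => γ u a) s ∧
            DifferentiableAt ℝ (deriv fun u => γ u a) s) →
        (∀ s ∈ I, ∑ a, t a * deriv (fun u => γ u a) s = 1) →
        ((∀ s ∈ I, ∀ a, deriv (deriv fun u => γ u a) s = -φ (γ s) a)
          ↔ (∀ s ∈ I, ∀ a,
              deriv (deriv fun u => γ u a) s
                + ∑ b, ∑ c, Γ (γ s) a b c
                    * deriv (fun u => γ u b) s * deriv (fun u => γ u c) s
              = -∑ b, F (γ s) a b * deriv (fun u => γ u b) s)))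
    -- (5) the field equation
    ∧ (∀ p ∈ U, ∀ b,
        (1 / 2) * ((∑ n, D p n n b) - (∑ n, D p b n n))
          = 2 * Real.pi * ρ p * t b)
    -- non-uniqueness: the torsion-free Newtonian pair satisfies the field equation too
    ∧ (∀ p ∈ U, ∀ b,
        (1 / 2) * ((∑ n, pd n (fun q => φ q n * t b) p)
            - (∑ n, pd b (fun q => φ q n * t n) p))
          = 2 * Real.pi * ρ p * t b)
    ∧ (∀ p, ∀ a b c, (φ p a * t b) * t c - (φ p a * t c) * t b = 0) := by
  -- expanded hypotheses
  have htx' : t 0 * x 0 + t 1 * x 1 + t 2 * x 2 + t 3 * x 3 = 0 := by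
    simpa [Fin.sum_univ_four] using htx
  have horth4 : ∀ a, h a 0 * t 0 + h a 1 * t 1 + h a 2 * t 2 + h a 3 * t 3 = 0 := fun a => by
    simpa [Fin.sum_univ_four] using horth a
  have horth4' : ∀ a, h 0 a * t 0 + h 1 a * t 1 + h 2 a * t 2 + h 3 a * t 3 = 0 := fun a => by
    linear_combination horth4 a - t 0 * hsym a 0 - t 1 * hsym a 1 - t 2 * hsym a 2 - t 3 * hsym a 3
  refine ⟨?_, ?_, ?_, ?_, ?_, ?_, ?_, ?_, ?_⟩
  · -- (1a) ∇ t = 0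
    intro p hp a b
    rw [pd_const]
    simp only [hΓ, Fin.sum_univ_four]
    linear_combination (pd a ψ p * t b) * htx'
  · -- (1b) ∇ h = 0
    intro p hp a b c
    rw [pd_const]
    simp only [hΓ, Fin.sum_univ_four]
    linear_combination (-(x b * pd a ψ p)) * horth4' c + (-(x c * pd a ψ p)) * horth4 b
  · -- (2) flatness
    intro p hp a b c d
    have key : ∀ c d : Fin 4,
        pd d (fun q => Γ q a c b) p = -(x a * t b) * pd d (fun q => pd c ψ q) p := by
      intro c d
      have hfe : (fun q => Γ q a c b) = fun q => (-(x a * t b)) * pd c ψ q := by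
        funext q; rw [hΓ]; ring
      rw [hfe, pd_const_mul (diff_pd hU hψ hp c)]
    rw [key c d, key d c, pd_swap hU hψ hp c d]
    simp only [hΓ, Fin.sum_univ_four]
    ring
  · -- (3) torsion has the force form
    intro p hp a b c
    simp only [hΓ, hF]
    ring
  · -- (3') torsion nonvanishing
    intro p hp
    by_contra hcon
    push_neg at hcon
    obtain ⟨a0, ha0⟩ := Function.ne_iff.mp hx
    obtain ⟨c0, hc0⟩ := Function.ne_iff.mp ht
    simp only [Pi.zero_apply] at ha0 hc0
    have hprop : ∀ b, pd b ψ p * t c0 = pd c0 ψ p * t b := by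
      intro b
      have h1 : x a0 * (pd b ψ p * t c0 - pd c0 ψ p * t b) = 0 := by
        have h2 := hcon a0 b c0
        simp only [hΓ] at h2
        linear_combination h2
      have h2 := (mul_eq_zero.mp h1).resolve_left ha0
      linarith
    set k : ℝ := pd c0 ψ p / t c0 with hkdef
    have hk : ∀ b, pd b ψ p = k * t b := by
      intro b
      have := hprop b
      rw [hkdef, div_mul_eq_mul_div, eq_div_iff hc0]
      linarith
    have hzero : (∑ a, ∑ b, h a b * pd a ψ p * pd b ψ p) = 0 := by
      simp only [hk, Fin.sum_univ_four]
      linear_combination (k^2 * t 0) * horth4 0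
        + (k^2 * t 1) * horth4 1 + (k^2 * t 2) * horth4 2 + (k^2 * t 3) * horth4 3
    exact absurd hzero (ne_of_gt (hψsp p hp))
  · -- (4) equations of motion
    intro I hI γ hγU hder hunit
    have key : ∀ s ∈ I, ∀ a,
        (∑ b, ∑ c, Γ (γ s) a b c * deriv (fun u => γ u b) s * deriv (fun u => γ u c) s)
          + (∑ b, F (γ s) a b * deriv (fun u => γ u b) s) = φ (γ s) a := by
      intro s hs a
      have hu := hunit s hs
      simp only [Fin.sum_univ_four] at hu
      simp only [hΓ, hF, Fin.sum_univ_four]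
      linear_combination (φ (γ s) a
        - x a * (pd 0 ψ (γ s) * deriv (fun u => γ u 0) s
          + pd 1 ψ (γ s) * deriv (fun u => γ u 1) s
          + pd 2 ψ (γ s) * deriv (fun u => γ u 2) s
          + pd 3 ψ (γ s) * deriv (fun u => γ u 3) s)) * hu
    constructor
    · intro hN s hs a
      have hk := key s hs a
      have hn := hN s hs a
      linarith
    · intro hFe s hs a
      have hk := key s hs a
      have hn := hFe s hs a
      linarith
  · -- (5) the field equation
    intro p hp b
    have hφd : ∀ n, DifferentiableAt ℝ (fun q => φ q n) p :=
      fun n => ((hφ n).contDiffAt (hU.mem_nhds hp)).differentiableAt (by simp)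
    have hψd : ∀ c, DifferentiableAt ℝ (fun q => pd c ψ q) p :=
      fun c => diff_pd hU hψ hp c
    have hpdF : ∀ n a c, pd n (fun q => F q a c) p
        = t c * pd n (fun q => φ q a) p + x a * pd n (fun q => pd c ψ q) p := by
      intro n a c
      have hfe : (fun q => F q a c) = fun q => (fun q => t c * φ q a) q + (fun q => x a * pd c ψ q) q := by
        funext q; rw [hF]; ring
      rw [hfe, pd_add ((hφd a).const_mul _) ((hψd c).const_mul _),
        pd_const_mul (hφd a), pd_const_mul (hψd c)]
    have hmix : ∀ c, (∑ n, x n * pd n (fun q => pd c ψ q) p) = 0 := by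
      intro c
      have h0 : pd c (fun q => ∑ n, x n * pd n ψ q) p
          = ∑ n, x n * pd c (fun q => pd n ψ q) p := by
        rw [pd_sum (fun n => (hψd n).const_mul (x n))]
        exact Finset.sum_congr rfl fun n _ => pd_const_mul (hψd n) c (x n)
      have h1 : pd c (fun q => ∑ n, x n * pd n ψ q) p = 0 :=
        pd_zero_of_eventually hU hp (fun q hq => hxψ q hq) c
      calc (∑ n, x n * pd n (fun q => pd c ψ q) p)
          = ∑ n, x n * pd c (fun q => pd n ψ q) p :=
            Finset.sum_congr rfl fun n _ => by rw [pd_swap hU hψ hp c n]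
        _ = 0 := by rw [← h0, h1]
    have quad1 : (∑ n, ∑ m, Γ p n n m * F p m b) = 0 := by
      have hxψ4 := hxψ p hp
      simp only [Fin.sum_univ_four] at hxψ4
      simp only [hΓ, Fin.sum_univ_four]
      linear_combination (-(t 0 * F p 0 b + t 1 * F p 1 b + t 2 * F p 2 b + t 3 * F p 3 b)) * hxψ4
    have quad2 : (∑ n, ∑ m, Γ p m n b * F p n m) = 0 := by
      have hxψ4 := hxψ p hp
      simp only [Fin.sum_univ_four] at hxψ4
      simp only [hΓ, hF, Fin.sum_univ_four]
      linear_combination (-(t b) * (pd 0 ψ p * φ p 0 + pd 1 ψ p * φ p 1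
          + pd 2 ψ p * φ p 2 + pd 3 ψ p * φ p 3)) * htx'
        + (-(t b) * (x 0 * pd 0 ψ p + x 1 * pd 1 ψ p + x 2 * pd 2 ψ p + x 3 * pd 3 ψ p)) * hxψ4
    have quad3 : (∑ n, ∑ m, Γ p n b m * F p m n) = 0 := by
      have hxψ4 := hxψ p hp
      have hφt4 := hφt p hp
      simp only [Fin.sum_univ_four] at hxψ4 hφt4
      simp only [hΓ, hF, Fin.sum_univ_four]
      linear_combination (-(pd b ψ p) * (t 0 * φ p 0 + t 1 * φ p 1 + t 2 * φ p 2 + t 3 * φ p 3)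
          - pd b ψ p * (x 0 * pd 0 ψ p + x 1 * pd 1 ψ p + x 2 * pd 2 ψ p + x 3 * pd 3 ψ p)) * htx'
    have quad4 : (∑ n, ∑ m, Γ p m b n * F p n m) = 0 := by
      have hxψ4 := hxψ p hp
      simp only [Fin.sum_univ_four] at hxψ4
      simp only [hΓ, hF, Fin.sum_univ_four]
      linear_combination (-(pd b ψ p) * (t 0 * φ p 0 + t 1 * φ p 1 + t 2 * φ p 2 + t 3 * φ p 3)
          - pd b ψ p * (x 0 * pd 0 ψ p + x 1 * pd 1 ψ p + x 2 * pd 2 ψ p + x 3 * pd 3 ψ p)) * htx'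
    have sumA : (∑ n, D p n n b) = 4 * Real.pi * ρ p * t b := by
      have e : ∀ n : Fin 4, D p n n b
          = (t b * pd n (fun q => φ q n) p + x n * pd n (fun q => pd b ψ q) p)
            + ((∑ m, Γ p n n m * F p m b) - (∑ m, Γ p m n b * F p n m)) := by
        intro n; rw [hD, hpdF]; ring
      rw [Finset.sum_congr rfl fun n _ => e n, Finset.sum_add_distrib, Finset.sum_sub_distrib,
        Finset.sum_add_distrib, ← Finset.mul_sum, hPoisson p hp, hmix b, quad1, quad2]
      ring
    have sumB : (∑ n, D p b n n) = 0 := by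
      have e : ∀ n : Fin 4, D p b n n
          = pd b (fun q => F q n n) p
            + ((∑ m, Γ p n b m * F p m n) - (∑ m, Γ p m b n * F p n m)) := by
        intro n; rw [hD]; ring
      have hdiff : ∀ n, DifferentiableAt ℝ (fun q => F q n n) p := by
        intro n
        have hfe : (fun q => F q n n) = fun q => (fun q => t n * φ q n) q + (fun q => x n * pd n ψ q) q := by
          funext q; rw [hF]; ring
        rw [hfe]
        exact ((hφd n).const_mul _).add ((hψd n).const_mul _)
      have B1 : (∑ n, pd b (fun q => F q n n) p) = 0 := by
        rw [← pd_sum hdiff]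
        refine pd_zero_of_eventually hU hp (fun q hq => ?_) b
        have h1 := hφt q hq
        have h2 := hxψ q hq
        simp only [hF, Fin.sum_univ_four] at h1 h2 ⊢
        linarith
      rw [Finset.sum_congr rfl fun n _ => e n, Finset.sum_add_distrib, Finset.sum_sub_distrib,
        B1, quad3, quad4]
      ring
    rw [sumA, sumB]
    ring
  · -- non-uniqueness: Newtonian pair satisfies the field equation
    intro p hp b
    have hφd : ∀ n, DifferentiableAt ℝ (fun q => φ q n) p :=
      fun n => ((hφ n).contDiffAt (hU.mem_nhds hp)).differentiableAt (by simp)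
    have e1 : ∀ n : Fin 4, pd n (fun q => φ q n * t b) p = t b * pd n (fun q => φ q n) p := by
      intro n
      have hfe : (fun q => φ q n * t b) = fun q => t b * φ q n := by funext q; ring
      rw [hfe, pd_const_mul (hφd n)]
    have e2 : (∑ n, pd b (fun q => φ q n * t n) p) = 0 := by
      have hdiff : ∀ n, DifferentiableAt ℝ (fun q => φ q n * t n) p :=
        fun n => (hφd n).mul_const _
      rw [← pd_sum hdiff]
      refine pd_zero_of_eventually hU hp (fun q hq => ?_) b
      have h1 := hφt q hq
      simp only [Fin.sum_univ_four] at h1 ⊢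
      linarith
    rw [Finset.sum_congr rfl fun n _ => e1 n, ← Finset.mul_sum, hPoisson p hp, e2]
    ring
  · -- the torsion of the Newtonian pair vanishes (trivial algebra)
    intro p a b c
    ring
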